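/- Let N, L, K, G be positive integers, {f̃_1,...,f̃_G} ⊂ [0,1) distinct grid points, T = {f_1,...,f_K} ⊆ {f̃_1,...,f̃_G}, c_k > 0, φ_k ∈ ℂ^{1×L} with ‖φ_k‖₂ = 1 for k = 1,...,K, and Ω ⊆ {1,...,N}. Set Y^o = Σ_{k=1}^K c_k a(f_k) φ_k. Suppose that the vectors {a_Ω(f_k)}_{k=1}^K are linearly independent and that there exists V ∈ ℂ^{N×L} such that Q(f) = a(f)ᴴ V satisfies: (i) Q(f_k) = φ_k for every f_k ∈ T; (ii) ‖Q(f̃_g)‖₂ < 1 for every grid point f̃_g ∉ T; and (iii) the j-th row of V is zero for every j ∉ Ω. Then the ℓ_{2,1} minimization problem min_{(s̃_g)_{g=1}^G, s̃_g ∈ ℂ^{1×L}} Σ_{g=1}^G ‖s̃_g‖₂ subject to Σ_{g=1}^G a_Ω(f̃_g) s̃_g = Y^o_Ω has as its unique solution s̃_g = c_k φ_k whenever f̃_g = f_k ∈ T and s̃_g = 0 otherwise. -/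

import Mathlib

open MeasureTheory ProbabilityTheory Finset

noncomputable section

/-- Euclidean norm of a finite complex vector. -/
def vnorm {ι : Type*} [Fintype ι] (x : ι → ℂ) : ℝ :=
  Real.sqrt (∑ i, Complex.normSq (x i))

/-- The atom `a(f) = (1, e^{2πif}, …, e^{2πi(N-1)f})`. -/
def atom (N : ℕ) (f : ℝ) : Fin N → ℂ :=
  fun j => Complex.exp (2 * Real.pi * Complex.I * f * (j : ℕ))

/-- Wrap-around distance on the unit circle `[0,1)`. -/
def wrapDist (x y : ℝ) : ℝ := min |x - y| (1 - |x - y|)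

/-- Coefficients of the squared Fejér kernel. -/
def gcoef (n : ℕ) (j : ℤ) : ℝ :=
  (1 / ((n : ℝ) + 1)) *
    ∑ k ∈ Finset.Icc (max (j - (n : ℤ) - 1) (-(n : ℤ) - 1)) (min (j + (n : ℤ) + 1) ((n : ℤ) + 1)),
      (1 - |(k : ℝ)| / ((n : ℝ) + 1)) * (1 - |((j - k : ℤ) : ℝ)| / ((n : ℝ) + 1))

/-- The partially observed squared Fejér kernel, with selection `sel`. -/
def fejerSel (n : ℕ) (sel : ℤ → Bool) (f : ℝ) : ℂ :=
  ∑ j ∈ Finset.Icc (-(2 * (n : ℤ))) (2 * (n : ℤ)),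
    (if sel j then (1 : ℂ) else 0) * (gcoef n j : ℂ) *
      Complex.exp (-(2 * Real.pi * Complex.I) * (j : ℤ) * f)

/-- The squared Fejér kernel (as a trigonometric polynomial). -/
def fejer (n : ℕ) : ℝ → ℂ := fejerSel n fun _ => true

/-- `l`-th derivative of the squared Fejér kernel. -/
def fejerD (n : ℕ) (l : ℕ) (f : ℝ) : ℂ := iteratedDeriv l (fejer n) f

/-- `l`-th derivative of the partially observed squared Fejér kernel. -/
def fejerSelD (n : ℕ) (sel : ℤ → Bool) (l : ℕ) (f : ℝ) : ℂ :=
  iteratedDeriv l (fejerSel n sel) f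

/-- The constant `c₀ = √(4π²n(n+2)/3) = √|K''(0)|`. -/
def c0 (n : ℕ) : ℝ := Real.sqrt (4 * Real.pi ^ 2 * n * (n + 2) / 3)

/-- The `2K × 2K` matrix built from a kernel-derivative function `κ l f`. -/
def Dgen {K : ℕ} (freq : Fin K → ℝ) (n : ℕ) (κ : ℕ → ℝ → ℂ) :
    Matrix (Fin K ⊕ Fin K) (Fin K ⊕ Fin K) ℂ :=
  fun r s =>
    match r, s with
    | .inl j, .inl k => κ 0 (freq j - freq k)
    | .inl j, .inr k => ((c0 n : ℝ) : ℂ)⁻¹ * κ 1 (freq j - freq k)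
    | .inr j, .inl k => -((c0 n : ℝ) : ℂ)⁻¹ * κ 1 (freq j - freq k)
    | .inr j, .inr k => -(((c0 n : ℝ) : ℂ)⁻¹) ^ 2 * κ 2 (freq j - freq k)

/-- The deterministic matrix `D`. -/
def Dmat {K : ℕ} (n : ℕ) (freq : Fin K → ℝ) : Matrix (Fin K ⊕ Fin K) (Fin K ⊕ Fin K) ℂ :=
  Dgen freq n (fejerD n)

/-- The random (partially observed) matrix `D̄`. -/
def DmatBar {K : ℕ} (n : ℕ) (freq : Fin K → ℝ) (sel : ℤ → Bool) :
    Matrix (Fin K ⊕ Fin K) (Fin K ⊕ Fin K) ℂ :=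
  Dgen freq n (fejerSelD n sel)

/-- Spectral norm (ℓ² operator norm) of a square complex matrix. -/
def specNorm {m : Type*} [Fintype m] [DecidableEq m] (A : Matrix m m ℂ) : ℝ :=
  ‖Matrix.toEuclideanCLM (𝕜 := ℂ) A‖

/-- First `K` columns of `D⁻¹`. -/
def Lcols {K : ℕ} (D : Matrix (Fin K ⊕ Fin K) (Fin K ⊕ Fin K) ℂ) :
    Matrix (Fin K ⊕ Fin K) (Fin K) ℂ :=
  fun i k => D⁻¹ i (Sum.inl k)

/-- The vector `v_l(f)` built from a kernel-derivative function `κ`. -/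
def vgen {K : ℕ} (freq : Fin K → ℝ) (n : ℕ) (κ : ℕ → ℝ → ℂ) (l : ℕ) (f : ℝ) :
    Fin K ⊕ Fin K → ℂ :=
  Sum.elim (fun k => ((((c0 n) ^ l)⁻¹ : ℝ) : ℂ) * (starRingEnd ℂ) (κ l (f - freq k)))
    (fun k => ((((c0 n) ^ (l + 1))⁻¹ : ℝ) : ℂ) * (starRingEnd ℂ) (κ (l + 1) (f - freq k)))

/-- The deterministic vector `v_l(f)`. -/
def vvec {K : ℕ} (n : ℕ) (freq : Fin K → ℝ) (l : ℕ) (f : ℝ) : Fin K ⊕ Fin K → ℂ :=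
  vgen freq n (fejerD n) l f

/-- The random vector `v̄_l(f)`. -/
def vvecBar {K : ℕ} (n : ℕ) (freq : Fin K → ℝ) (sel : ℤ → Bool) (l : ℕ) (f : ℝ) :
    Fin K ⊕ Fin K → ℂ :=
  vgen freq n (fejerSelD n sel) l f

/-- `Lᴴ x` for a `2K × K` matrix `L` and a `2K`-vector `x`. -/
def applyH {K : ℕ} (L : Matrix (Fin K ⊕ Fin K) (Fin K) ℂ) (x : Fin K ⊕ Fin K → ℂ) :
    Fin K → ℂ :=
  fun k => ∑ i, (starRingEnd ℂ) (L i k) * x i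

/-- The row vector `xᴴ L Φ ∈ ℂ^{1×L}`. -/
def quadForm {K L : ℕ} (x : Fin K ⊕ Fin K → ℂ) (Lm : Matrix (Fin K ⊕ Fin K) (Fin K) ℂ)
    (Φ : Fin K → Fin L → ℂ) : Fin L → ℂ :=
  fun a => ∑ k, (∑ i, (starRingEnd ℂ) (x i) * Lm i k) * Φ k a

/-- A probability measure on `ℂ^L` is the uniform distribution on the unit sphere iff it is
supported on the unit sphere and invariant under every unitary transformation. -/
def IsUniformOnSphere (L : ℕ) (ν : Measure (Fin L → ℂ)) : Prop :=
  IsProbabilityMeasure ν ∧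
  ν {x : Fin L → ℂ | ∑ i, Complex.normSq (x i) = 1}ᶜ = 0 ∧
  ∀ U : Matrix (Fin L) (Fin L) ℂ, U ∈ Matrix.unitaryGroup (Fin L) ℂ →
    ν.map (fun x i => ∑ j, U i j * x j) = ν

end

/-! The certificate `Q = Aᴴ V` pairs with every feasible `s` to the same value, because `V`
vanishes off `Ω`: `⟪Q, s⟫ = ⟪V, A s⟫` only sees the observed rows `Y_Ω`. For the true
coefficients this value is `∑ c_k = ∑_g ‖s_g‖`, while Cauchy–Schwarz with `‖Q(f̃_g)‖ ≤ 1` bounds it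
by `∑_g ‖s_g‖` for any `s`, strictly as soon as `s` charges a grid point outside `T`. So a feasible
`s` of no larger `ℓ_{2,1}` norm is supported on `T`, where the linear independence of the
`a_Ω(f_k)` pins it down. -/

open ComplexConjugate Matrix

section Vnorm

variable {ι : Type*} [Fintype ι]

lemma vnorm_eq_norm_toLp (x : ι → ℂ) : vnorm x = ‖WithLp.toLp 2 x‖ := by
  simp [vnorm, EuclideanSpace.norm_eq, Complex.normSq_eq_norm_sq]

lemma vnorm_nonneg (x : ι → ℂ) : 0 ≤ vnorm x := Real.sqrt_nonneg _

lemma vnorm_eq_zero {x : ι → ℂ} : vnorm x = 0 ↔ x = 0 := by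
  simp [vnorm_eq_norm_toLp]

lemma vnorm_ofReal_mul (c : ℝ) (x : ι → ℂ) : vnorm (fun i => (c : ℂ) * x i) = |c| * vnorm x := by
  have : WithLp.toLp 2 (fun i => (c : ℂ) * x i) = (c : ℂ) • WithLp.toLp 2 x := rfl
  rw [vnorm_eq_norm_toLp, vnorm_eq_norm_toLp, this, norm_smul, Complex.norm_real, Real.norm_eq_abs]

lemma norm_sum_conj_mul_le (x y : ι → ℂ) : ‖∑ i, conj (x i) * y i‖ ≤ vnorm x * vnorm y := by
  simpa [vnorm_eq_norm_toLp, PiLp.inner_apply, mul_comm] using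
    norm_inner_le_norm (𝕜 := ℂ) (WithLp.toLp 2 x) (WithLp.toLp 2 y)

lemma sum_conj_mul_self (x : ι → ℂ) : ∑ i, conj (x i) * x i = ((vnorm x ^ 2 : ℝ) : ℂ) := by
  rw [vnorm, Real.sq_sqrt (Finset.sum_nonneg fun i _ => Complex.normSq_nonneg _)]
  push_cast
  simp [Complex.normSq_eq_conj_mul_self]

end Vnorm

section Pairing

variable {γ n m : Type*} [Fintype γ] [Fintype n] [Fintype m]

lemma trace_conjTranspose_mul_eq_sum_rows (Q s : Matrix γ m ℂ) :
    (Qᴴ * s).trace = ∑ g, ∑ l, conj (Q g l) * s g l := by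
  simp only [trace, Matrix.diag, mul_apply, conjTranspose_apply, Complex.star_def]
  exact Finset.sum_comm

lemma trace_conjTranspose_mul_congr_of_rows_zero (Ω : Finset n) {V Y Y' : Matrix n m ℂ}
    (hV : ∀ j ∉ Ω, ∀ l, V j l = 0) (hY : ∀ j ∈ Ω, ∀ l, Y j l = Y' j l) :
    (Vᴴ * Y).trace = (Vᴴ * Y').trace := by
  rw [trace_conjTranspose_mul_eq_sum_rows, trace_conjTranspose_mul_eq_sum_rows]
  refine Finset.sum_congr rfl fun j _ => Finset.sum_congr rfl fun l _ => ?_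
  by_cases hj : j ∈ Ω
  · rw [hY j hj l]
  · simp [hV j hj l]

lemma norm_trace_conjTranspose_mul_le (Q s : Matrix γ m ℂ) :
    ‖(Qᴴ * s).trace‖ ≤ ∑ g, vnorm (Q g) * vnorm (s g) := by
  rw [trace_conjTranspose_mul_eq_sum_rows]
  exact (norm_sum_le _ _).trans (Finset.sum_le_sum fun g _ => norm_sum_conj_mul_le _ _)

lemma trace_conjTranspose_mul_eq_sum_vnorm {κ : Type*} {ι : κ → γ} {c : κ → ℝ} (hc : ∀ k, 0 ≤ c k)
    {Q S : Matrix γ m ℂ} (hQ : ∀ k, vnorm (Q (ι k)) = 1)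
    (hS_ι : ∀ k, S (ι k) = fun l => (c k : ℂ) * Q (ι k) l) (hS_supp : ∀ g ∉ Set.range ι, S g = 0) :
    (Qᴴ * S).trace = ∑ g, vnorm (S g) := by
  rw [trace_conjTranspose_mul_eq_sum_rows]
  push_cast
  refine Finset.sum_congr rfl fun g _ => ?_
  by_cases hg : g ∈ Set.range ι
  · obtain ⟨k, rfl⟩ := hg
    rw [hS_ι k, vnorm_ofReal_mul, hQ k, abs_of_nonneg (hc k)]
    simp_rw [mul_left_comm _ (c k : ℂ), ← Finset.mul_sum, sum_conj_mul_self, hQ k]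
    simp
  · simp [hS_supp g hg, vnorm]

lemma norm_trace_conjTranspose_mul_lt_sum_vnorm {Q s : Matrix γ m ℂ}
    (hQ : ∀ g, vnorm (Q g) ≤ 1) {g : γ} (hQg : vnorm (Q g) < 1) (hsg : s g ≠ 0) :
    ‖(Qᴴ * s).trace‖ < ∑ g, vnorm (s g) := by
  refine (norm_trace_conjTranspose_mul_le Q s).trans_lt <| Finset.sum_lt_sum
    (fun g _ => mul_le_of_le_one_left (vnorm_nonneg _) (hQ g)) ⟨g, Finset.mem_univ g, ?_⟩
  exact mul_lt_of_lt_one_left ((vnorm_nonneg _).lt_of_ne' (vnorm_eq_zero.not.mpr hsg)) hQg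

end Pairing

section Recovery

variable {κ γ n m : Type*} [Fintype κ] [Fintype γ] [Fintype n] [Fintype m]

omit [Fintype n] [Fintype m] in
lemma mul_apply_eq_sum_of_support_range {A : Matrix n γ ℂ} {ι : κ → γ} (hι : ι.Injective)
    {s : Matrix γ m ℂ} (hs : ∀ g ∉ Set.range ι, s g = 0) (j : n) (l : m) :
    (A * s) j l = ∑ k, s (ι k) l • A j (ι k) := by
  rw [mul_apply]
  refine (Fintype.sum_of_injective ι hι _ _ (fun g hg => by simp [hs g hg]) fun k => ?_).symm
  rw [smul_eq_mul, mul_comm]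

omit [Fintype n] [Fintype m] in
lemma eq_of_mul_eq_on_of_support_range {A : Matrix n γ ℂ} (Ω : Finset n) {ι : κ → γ}
    (hι : ι.Injective) (hA : LinearIndependent ℂ fun k (j : Ω) => A j (ι k))
    {s t : Matrix γ m ℂ} (hs : ∀ g ∉ Set.range ι, s g = 0) (ht : ∀ g ∉ Set.range ι, t g = 0)
    (hst : ∀ j ∈ Ω, ∀ l, (A * s) j l = (A * t) j l) : s = t := by
  have hι_eq : ∀ k l, s (ι k) l = t (ι k) l := fun k l =>
    Fintype.linearIndependent_iffₛ.mp hA (fun k => s (ι k) l) (fun k => t (ι k) l)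
      (funext fun j => by
        simpa [mul_apply_eq_sum_of_support_range hι hs,
          mul_apply_eq_sum_of_support_range hι ht] using hst j j.2 l) k
  ext g l
  by_cases hg : g ∈ Set.range ι
  · obtain ⟨k, rfl⟩ := hg
    exact hι_eq k l
  · rw [hs g hg, ht g hg]

theorem sum_vnorm_lt_of_dual_certificate (A : Matrix n γ ℂ) (Ω : Finset n) {ι : κ → γ}
    (hι : ι.Injective) (hA : LinearIndependent ℂ fun k (j : Ω) => A j (ι k))
    {V : Matrix n m ℂ} (hV : ∀ j ∉ Ω, ∀ l, V j l = 0) {c : κ → ℝ} (hc : ∀ k, 0 ≤ c k)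
    (hQ_supp : ∀ k, vnorm ((Aᴴ * V) (ι k)) = 1)
    (hQ_off : ∀ g ∉ Set.range ι, vnorm ((Aᴴ * V) g) < 1)
    {S : Matrix γ m ℂ} (hS_ι : ∀ k, S (ι k) = fun l => (c k : ℂ) * (Aᴴ * V) (ι k) l)
    (hS_supp : ∀ g ∉ Set.range ι, S g = 0)
    {s : Matrix γ m ℂ} (hs : ∀ j ∈ Ω, ∀ l, (A * s) j l = (A * S) j l) (hne : s ≠ S) :
    ∑ g, vnorm (S g) < ∑ g, vnorm (s g) := by
  have hQ_le : ∀ g, vnorm ((Aᴴ * V) g) ≤ 1 := fun g => by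
    by_cases hg : g ∈ Set.range ι
    · obtain ⟨k, rfl⟩ := hg
      exact (hQ_supp k).le
    · exact (hQ_off g hg).le
  have hpair : ((Aᴴ * V)ᴴ * s).trace = ∑ g, vnorm (S g) := by
    rw [← trace_conjTranspose_mul_eq_sum_vnorm hc hQ_supp hS_ι hS_supp]
    simp only [conjTranspose_mul, conjTranspose_conjTranspose, Matrix.mul_assoc]
    exact trace_conjTranspose_mul_congr_of_rows_zero Ω hV hs
  by_contra! hle
  have hs_supp : ∀ g ∉ Set.range ι, s g = 0 := fun g hg => by
    by_contra hsg
    refine (norm_trace_conjTranspose_mul_lt_sum_vnorm hQ_le (hQ_off g hg) hsg).not_ge ?_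
    rw [hpair]
    exact hle.trans_eq (Complex.norm_of_nonneg (Finset.sum_nonneg fun g _ => vnorm_nonneg _)).symm
  exact hne (eq_of_mul_eq_on_of_support_range Ω hι hA hs_supp hS_supp hs)

end Recovery

theorem dual_certificate_l21_recovery_general (N L K G : ℕ)
    (fg : Fin G → ℝ)
    (f : Fin K → ℝ) (ι : Fin K → Fin G) (hιinj : Function.Injective ι)
    (hfι : ∀ k, fg (ι k) = f k)
    (c : Fin K → ℝ) (hc : ∀ k, 0 < c k)
    (φ : Fin K → Fin L → ℂ) (hφ : ∀ k, ∑ l, Complex.normSq (φ k l) = 1)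
    (Ω : Finset (Fin N))
    (hLI : LinearIndependent ℂ fun k : Fin K => fun j : {j : Fin N // j ∈ Ω} =>
      atom N (f k) (j : Fin N))
    (V : Matrix (Fin N) (Fin L) ℂ)
    (hQeq : ∀ k, (fun l => ∑ j, (starRingEnd ℂ) (atom N (f k) j) * V j l) = φ k)
    (hQlt : ∀ g : Fin G, (¬ ∃ k, ι k = g) →
      vnorm (fun l => ∑ j, (starRingEnd ℂ) (atom N (fg g) j) * V j l) < 1)
    (hVz : ∀ j : Fin N, j ∉ Ω → ∀ l, V j l = 0) :
    (∀ j ∈ Ω, ∀ l,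
      (∑ g, atom N (fg g) j * (∑ k, if ι k = g then (c k : ℂ) * φ k l else 0)) =
        ∑ k, (c k : ℂ) * atom N (f k) j * φ k l) ∧
    (∀ s : Fin G → Fin L → ℂ,
      (∀ j ∈ Ω, ∀ l, (∑ g, atom N (fg g) j * s g l) = ∑ k, (c k : ℂ) * atom N (f k) j * φ k l) →
      s ≠ (fun g l => ∑ k, if ι k = g then (c k : ℂ) * φ k l else 0) →
      (∑ g, vnorm (fun l => ∑ k, if ι k = g then (c k : ℂ) * φ k l else 0)) <
        ∑ g, vnorm (s g)) := by
  let A : Matrix (Fin N) (Fin G) ℂ := Matrix.of fun j g => atom N (fg g) j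
  set S : Matrix (Fin G) (Fin L) ℂ := fun g l => ∑ k, if ι k = g then (c k : ℂ) * φ k l else 0
  have hS_ι : ∀ k, S (ι k) = fun l => (c k : ℂ) * φ k l := fun k => by
    ext l; simp [S, hιinj.eq_iff]
  have hS_supp : ∀ g ∉ Set.range ι, S g = 0 := fun g hg => by
    ext l; simp_all [S]
  have hAS : ∀ j l, (A * S) j l = ∑ k, (c k : ℂ) * atom N (f k) j * φ k l := fun j l => by
    simp [mul_apply_eq_sum_of_support_range hιinj hS_supp, hS_ι, A, hfι, mul_comm, mul_left_comm]
  have hQ : ∀ k, (Aᴴ * V) (ι k) = φ k := fun k => by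
    rw [← hQeq k]; ext l; simp [A, mul_apply, hfι]
  have hφ1 : ∀ k, vnorm (φ k) = 1 := fun k => by rw [vnorm, hφ k, Real.sqrt_one]
  refine ⟨fun j _ l => by simpa [A, mul_apply] using hAS j l, fun s hs hne => ?_⟩
  refine sum_vnorm_lt_of_dual_certificate A Ω hιinj (by simpa [A, hfι] using hLI) hVz
    (fun k => (hc k).le) (fun k => by rw [hQ k, hφ1 k]) (fun g hg => ?_)
    (fun k => by rw [hS_ι k, hQ k]) hS_supp (fun j hj l => ?_) hne
  · exact hQlt g hg
  · rw [hAS]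
    exact hs j hj l

/-- Dual certificate proposition for `ℓ_{2,1}` minimization on a grid: under the dual polynomial
conditions, the `ℓ_{2,1}` minimization problem has the true coefficients as its unique solution. -/
theorem dual_certificate_l21_recovery (N L K G : ℕ) (hN : 0 < N) (hL : 0 < L) (hK : 0 < K)
    (hG : 0 < G)
    (fg : Fin G → ℝ) (hfg : ∀ g, fg g ∈ Set.Ico (0 : ℝ) 1) (hfginj : Function.Injective fg)
    (f : Fin K → ℝ) (ι : Fin K → Fin G) (hιinj : Function.Injective ι)
    (hfι : ∀ k, fg (ι k) = f k)
    (c : Fin K → ℝ) (hc : ∀ k, 0 < c k)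
    (φ : Fin K → Fin L → ℂ) (hφ : ∀ k, ∑ l, Complex.normSq (φ k l) = 1)
    (Ω : Finset (Fin N))
    (hLI : LinearIndependent ℂ fun k : Fin K => fun j : {j : Fin N // j ∈ Ω} =>
      atom N (f k) (j : Fin N))
    (V : Matrix (Fin N) (Fin L) ℂ)
    (hQeq : ∀ k, (fun l => ∑ j, (starRingEnd ℂ) (atom N (f k) j) * V j l) = φ k)
    (hQlt : ∀ g : Fin G, (¬ ∃ k, ι k = g) →
      vnorm (fun l => ∑ j, (starRingEnd ℂ) (atom N (fg g) j) * V j l) < 1)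
    (hVz : ∀ j : Fin N, j ∉ Ω → ∀ l, V j l = 0) :
    (∀ j ∈ Ω, ∀ l,
      (∑ g, atom N (fg g) j * (∑ k, if ι k = g then (c k : ℂ) * φ k l else 0)) =
        ∑ k, (c k : ℂ) * atom N (f k) j * φ k l) ∧
    (∀ s : Fin G → Fin L → ℂ,
      (∀ j ∈ Ω, ∀ l, (∑ g, atom N (fg g) j * s g l) = ∑ k, (c k : ℂ) * atom N (f k) j * φ k l) →
      s ≠ (fun g l => ∑ k, if ι k = g then (c k : ℂ) * φ k l else 0) →
      (∑ g, vnorm (fun l => ∑ k, if ι k = g then (c k : ℂ) * φ k l else 0)) <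
        ∑ g, vnorm (s g)) :=
  dual_certificate_l21_recovery_general N L K G fg f ι hιinj hfι c hc φ hφ Ω hLI V hQeq hQlt hVz
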